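/- The iterated-sums signature is invariant to insertion of zeros: let x be a d-dimensional real time series of length T, let 1 ≤ t_0 ≤ T+1, and let y be the time series of length T+1 defined by y_i = x_i for i < t_0, y_{t_0} = 0 ∈ ℝ^d, and y_i = x_{i−1} for i > t_0. Then for every word w (all of whose letters have at least one nonzero entry), ⟨w, ISS_{0,T}(x)⟩ = ⟨w, ISS_{0,T+1}(y)⟩. -/

import Mathlib

/-- The monomial `x_t^{[a]} = ∏_j (x_t^{(j)})^{a_j}`. -/
def mono {d : ℕ} (x : ℕ → Fin d → ℝ) (t : ℕ) (a : Fin d → ℕ) : ℝ :=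
  ∏ j, (x t j) ^ (a j)

/-- The iterated-sums signature coefficient
`⟨[a_1]⋯[a_p], ISS_{s,t}(x)⟩ = ∑_{s < t_1 < ⋯ < t_p ≤ t} x_{t_1}^{[a_1]} ⋯ x_{t_p}^{[a_p]}`. -/
def iss {d : ℕ} (x : ℕ → Fin d → ℝ) : List (Fin d → ℕ) → ℕ → ℕ → ℝ
  | [], _, _ => 1
  | a :: w, s, t => ∑ i ∈ Finset.Ioc s t, mono x i a * iss x w i t

/-!
A time `j` at which `y` vanishes contributes nothing to any sum `∑ x_{t_1}^{[a_1]} ⋯`, because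
every letter has a nonzero exponent and so `y_j^{[a]} = 0`. Hence the iterated sums of `y` only
see the times where `y` carries the values of `x`, and these occur in the same order as in `x`.
-/

lemma mono_eq_zero {d : ℕ} {x : ℕ → Fin d → ℝ} {t : ℕ} (hx : x t = 0) {a : Fin d → ℕ}
    (ha : ∃ j, a j ≠ 0) : mono x t a = 0 := by
  obtain ⟨j, hj⟩ := ha
  exact Finset.prod_eq_zero (Finset.mem_univ j) (by simp [hx, zero_pow hj])

lemma mono_comp {d : ℕ} (x : ℕ → Fin d → ℝ) (e : ℕ → ℕ) (t : ℕ) (a : Fin d → ℕ) :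
    mono (x ∘ e) t a = mono x (e t) a :=
  rfl

structure IsZeroPadding {d : ℕ} (e : ℕ → ℕ) (x y : ℕ → Fin d → ℝ) : Prop where
  strictMono : StrictMono e
  comp_eq : y ∘ e = x
  eq_zero_of_notMem_range : ∀ j ∉ Set.range e, y j = 0

theorem IsZeroPadding.iss_eq {d : ℕ} {e : ℕ → ℕ} {x y : ℕ → Fin d → ℝ}
    (h : IsZeroPadding e x y) {t t' : ℕ} (ht : ∀ i, e i ≤ t' ↔ i ≤ t)
    (w : List (Fin d → ℕ)) (hw : ∀ a ∈ w, ∃ j, a j ≠ 0) (s : ℕ) :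
    iss y w (e s) t' = iss x w s t := by
  induction w generalizing s with
  | nil => rfl
  | cons a w ih =>
    have ha : ∃ j, a j ≠ 0 := hw a List.mem_cons_self
    have ih := ih fun b hb => hw b (List.mem_cons_of_mem a hb)
    have mem_iff : ∀ i, e i ∈ Finset.Ioc (e s) t' ↔ i ∈ Finset.Ioc s t := by
      intro i
      simp only [Finset.mem_Ioc, h.strictMono.lt_iff_lt, ht]
    have image_subset : (Finset.Ioc s t).image e ⊆ Finset.Ioc (e s) t' := by
      simp only [Finset.image_subset_iff, mem_iff, imp_self, implies_true]
    have vanish_off_image : ∀ j ∈ Finset.Ioc (e s) t', j ∉ (Finset.Ioc s t).image e →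
        mono y j a * iss y w j t' = 0 := by
      intro j hj hjimage
      have hjrange : j ∉ Set.range e := by
        rintro ⟨i, rfl⟩
        exact hjimage (Finset.mem_image_of_mem e ((mem_iff i).1 hj))
      rw [mono_eq_zero (h.eq_zero_of_notMem_range j hjrange) ha, zero_mul]
    calc iss y (a :: w) (e s) t'
        = ∑ j ∈ (Finset.Ioc s t).image e, mono y j a * iss y w j t' :=
          (Finset.sum_subset image_subset vanish_off_image).symm
      _ = ∑ i ∈ Finset.Ioc s t, mono y (e i) a * iss y w (e i) t' :=
          Finset.sum_image fun i _ j _ hij => h.strictMono.injective hij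
      _ = iss x (a :: w) s t := by
          refine Finset.sum_congr rfl fun i _ => ?_
          rw [ih, ← mono_comp, h.comp_eq]

/-- The analogue on `ℕ` of `Fin.succAbove`: the increasing map that skips the value `p`. -/
def succAbove (p i : ℕ) : ℕ :=
  if i < p then i else i + 1

lemma strictMono_succAbove (p : ℕ) : StrictMono (succAbove p) := by
  intro i j hij
  unfold succAbove
  split_ifs <;> omega

lemma isZeroPadding_succAbove {d : ℕ} {x y : ℕ → Fin d → ℝ} {p : ℕ}
    (hy_lt : ∀ i, i < p → y i = x i) (hy_eq : y p = 0) (hy_gt : ∀ i, p < i → y i = x (i - 1)) :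
    IsZeroPadding (succAbove p) x y where
  strictMono := strictMono_succAbove p
  comp_eq := by
    funext i
    simp only [Function.comp_apply, succAbove]
    split_ifs with hi
    · exact hy_lt i hi
    · exact hy_gt (i + 1) (by omega)
  eq_zero_of_notMem_range j hj := by
    obtain rfl : j = p := by
      by_contra hjp
      refine hj ⟨if j < p then j else j - 1, ?_⟩
      unfold succAbove
      split_ifs <;> omega
    exact hy_eq

/-- Invariance of the iterated-sums signature to insertion of zeros: if `y` of length
`T+1` is obtained from `x` of length `T` by inserting the value `0 ∈ ℝ^d` at position
`t_0` (`1 ≤ t_0 ≤ T+1`), then `⟨w, ISS_{0,T}(x)⟩ = ⟨w, ISS_{0,T+1}(y)⟩` for every word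
`w` all of whose letters have at least one nonzero entry. -/
theorem iss_invariant_zero_insertion {d T : ℕ} (x y : ℕ → Fin d → ℝ) (t₀ : ℕ)
    (ht₀1 : 1 ≤ t₀) (ht₀2 : t₀ ≤ T + 1)
    (hy_lt : ∀ i, i < t₀ → y i = x i)
    (hy_eq : y t₀ = 0)
    (hy_gt : ∀ i, t₀ < i → y i = x (i - 1))
    (w : List (Fin d → ℕ)) (hletters : ∀ a ∈ w, ∃ j, a j ≠ 0) :
    iss x w 0 T = iss y w 0 (T + 1) := by
  have hpad : IsZeroPadding (succAbove t₀) x y := isZeroPadding_succAbove hy_lt hy_eq hy_gt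
  have hstart : succAbove t₀ 0 = 0 := if_pos ht₀1
  have hend : ∀ i, succAbove t₀ i ≤ T + 1 ↔ i ≤ T := by
    intro i
    unfold succAbove
    split_ifs <;> omega
  rw [← hpad.iss_eq hend w hletters 0, hstart]
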